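/- arXiv:1907.10536 — 2 statements merged into one kernel-verified Lean document; each statement's English description precedes it below -/
import Mathlib

section
/- Let α ≥ 1 and h > 0, and let (x_k)_{k≥0} be a sequence in H satisfying, for every k ≥ 1, the implicit recursion k(x_{k+1} − 2x_k + x_{k−1}) + α(x_{k+1} − x_k) + β_k·h·k·(∇f(x_{k+1}) − ∇f(x_k)) + b_k·h²·k·∇f(x_{k+1}) = 0 (the (IPAHD) algorithm). Set δ_k := h·(b_k·h·k − β_{k+1} − k(β_{k+1} − β_k))·(k+1), and suppose the growth conditions (G2dis): b_k·h·k − β_{k+1} − k(β_{k+1} − β_k) > 0 for all k, and (G3dis): δ_{k+1} − δ_k ≤ (α−1)·δ_k/(k+1) for all k. Then Σ_k δ_k·β_{k+1}·‖∇f(x_{k+1})‖² < +∞. -/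
/-! The recursion says exactly that the vector
`z k = (α - 1) • (x k - x*) + k • (x k - x (k - 1)) + (β k * h * k) • ∇f (x k)` moves by
`z (k + 1) - z k = -(δ k / (k + 1)) • ∇f (x (k + 1))`. Pairing this with `z (k + 1)`, the gradient
inequality of the convex `f` at `x (k + 1)` (against `x*` and against `x k`) and (G3dis) make the
energy `δ k * (f (x k) - min f) + ‖z k‖² / 2` decrease by at least
`h * δ k * β (k + 1) * ‖∇f (x (k + 1))‖²` per step; being nonnegative, it bounds the partial sums. -/

open Real Set
open scoped RealInnerProductSpace

theorem ConvexOn.sub_le_inner_gradient {H : Type*} [NormedAddCommGroup H]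
    [InnerProductSpace ℝ H] [CompleteSpace H] {f : H → ℝ} (hf : ConvexOn ℝ univ f) {u : H}
    (hu : DifferentiableAt ℝ f u) (w : H) : f u - f w ≤ ⟪gradient f u, u - w⟫ := by
  have hφ : HasDerivAt (f ∘ AffineMap.lineMap u w) ⟪gradient f u, w - u⟫ (0 : ℝ) := by
    have hu' : HasFDerivAt f (InnerProductSpace.toDual ℝ H (gradient f u))
        (AffineMap.lineMap u w (0 : ℝ)) := by
      simpa using hu.hasGradientAt.hasFDerivAt
    simpa using hu'.comp_hasDerivAt (0 : ℝ) AffineMap.hasDerivAt_lineMap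
  have hslope := (hf.comp_affineMap (AffineMap.lineMap u w)).le_slope_of_hasDerivAt
    (mem_univ 0) (mem_univ 1) one_pos hφ
  simp only [slope_def_field, Function.comp_apply, AffineMap.lineMap_apply_zero,
    AffineMap.lineMap_apply_one, sub_zero, div_one] at hslope
  rw [← neg_sub u w, inner_neg_right] at hslope
  linarith

theorem half_sq_norm_sub_half_sq_norm_le_inner {E : Type*} [NormedAddCommGroup E]
    [InnerProductSpace ℝ E] (u v : E) : ‖u‖ ^ 2 / 2 - ‖v‖ ^ 2 / 2 ≤ ⟪u, u - v⟫ := by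
  have h := norm_sub_sq_real u (u - v)
  rw [sub_sub_cancel] at h
  nlinarith [sq_nonneg ‖u - v‖]

theorem summable_of_add_le_of_nonneg {E a : ℕ → ℝ} (hE : ∀ k, 0 ≤ E k) (ha : ∀ k, 0 ≤ a k)
    (hstep : ∀ k, E (k + 1) + a k ≤ E k) : Summable a := by
  have hpartial : ∀ n, ∑ i ∈ Finset.range n, a i + E n ≤ E 0 := by
    intro n
    induction n with
    | zero => simp
    | succ n ih => rw [Finset.sum_range_succ]; linarith [hstep n]
  exact summable_of_sum_range_le ha fun n => by linarith [hpartial n, hE n]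

section IPAHD

variable {H : Type*} [NormedAddCommGroup H] [InnerProductSpace ℝ H] [CompleteSpace H]
  (f : H → ℝ) (xstar : H) (α h : ℝ) (β : ℕ → ℝ) (x : ℕ → H)

noncomputable def ipahdVec (k : ℕ) : H :=
  (α - 1) • (x k - xstar) + (k : ℝ) • (x k - x (k - 1)) + (β k * h * k) • gradient f (x k)

noncomputable def ipahdEnergy (δ : ℕ → ℝ) (k : ℕ) : ℝ :=
  δ k * (f (x k) - f xstar) + ‖ipahdVec f xstar α h β x k‖ ^ 2 / 2

variable {f xstar α h β x}

theorem ipahdVec_succ_sub {b : ℕ → ℝ} {k : ℕ} (hk : 1 ≤ k)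
    (hrec : (k : ℝ) • (x (k + 1) - (2 : ℝ) • x k + x (k - 1)) + α • (x (k + 1) - x k)
        + (β k * h * k) • (gradient f (x (k + 1)) - gradient f (x k))
        + (b k * h ^ 2 * k) • gradient f (x (k + 1)) = 0) :
    ipahdVec f xstar α h β x (k + 1) - ipahdVec f xstar α h β x k =
      -(h * (b k * h * k - β (k + 1) - k * (β (k + 1) - β k))) • gradient f (x (k + 1)) := by
  obtain ⟨m, rfl⟩ : ∃ m, k = m + 1 := ⟨k - 1, by omega⟩
  simp only [ipahdVec, Nat.add_sub_cancel]
  push_cast at hrec ⊢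
  linear_combination (norm := module) hrec

theorem le_inner_ipahdVec_gradient (hf : ConvexOn ℝ univ f) {k : ℕ}
    (hdiff : DifferentiableAt ℝ f (x (k + 1))) (hα : 1 ≤ α) :
    (α - 1) * (f (x (k + 1)) - f xstar) + (k + 1) * (f (x (k + 1)) - f (x k))
        + β (k + 1) * h * (k + 1) * ‖gradient f (x (k + 1))‖ ^ 2
      ≤ ⟪ipahdVec f xstar α h β x (k + 1), gradient f (x (k + 1))⟫ := by
  have hstar := mul_le_mul_of_nonneg_left (hf.sub_le_inner_gradient hdiff xstar)
    (sub_nonneg.2 hα)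
  have hprev := mul_le_mul_of_nonneg_left (hf.sub_le_inner_gradient hdiff (x k))
    (by positivity : (0 : ℝ) ≤ k + 1)
  rw [real_inner_comm] at hstar hprev
  simp only [ipahdVec, Nat.add_sub_cancel, inner_add_left, real_inner_smul_left,
    real_inner_self_eq_norm_sq]
  push_cast
  linarith

theorem ipahdEnergy_succ_add_le {b δ : ℕ → ℝ} (hf : ConvexOn ℝ univ f) {k : ℕ} (hk : 1 ≤ k)
    (hdiff : DifferentiableAt ℝ f (x (k + 1))) (hmin : f xstar ≤ f (x (k + 1))) (hα : 1 ≤ α)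
    (hrec : (k : ℝ) • (x (k + 1) - (2 : ℝ) • x k + x (k - 1)) + α • (x (k + 1) - x k)
        + (β k * h * k) • (gradient f (x (k + 1)) - gradient f (x k))
        + (b k * h ^ 2 * k) • gradient f (x (k + 1)) = 0)
    (hδ : δ k = h * (b k * h * k - β (k + 1) - k * (β (k + 1) - β k)) * (k + 1))
    (hδ_nonneg : 0 ≤ δ k) (hG3 : δ (k + 1) - δ k ≤ (α - 1) * δ k / (k + 1)) :
    ipahdEnergy f xstar α h β x δ (k + 1) + h * (δ k * β (k + 1) * ‖gradient f (x (k + 1))‖ ^ 2)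
      ≤ ipahdEnergy f xstar α h β x δ k := by
  set g := gradient f (x (k + 1))
  set q := δ k / (k + 1) with hq
  have hk1 : (0 : ℝ) < k + 1 := by positivity
  have hδq : δ k = q * (k + 1) := (div_mul_cancel₀ _ hk1.ne').symm
  have hvec : ipahdVec f xstar α h β x (k + 1) - ipahdVec f xstar α h β x k = -q • g := by
    rw [ipahdVec_succ_sub hk hrec, hq, hδ, mul_div_cancel_right₀ _ hk1.ne']
  have hnorm := half_sq_norm_sub_half_sq_norm_le_inner
    (ipahdVec f xstar α h β x (k + 1)) (ipahdVec f xstar α h β x k)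
  rw [hvec, real_inner_smul_right] at hnorm
  have hinner := mul_le_mul_of_nonneg_left
    (le_inner_ipahdVec_gradient (xstar := xstar) (h := h) (β := β) hf hdiff hα)
    (div_nonneg hδ_nonneg hk1.le)
  have hδsucc := mul_le_mul_of_nonneg_right hG3 (sub_nonneg.2 hmin)
  rw [← hq] at hinner
  rw [mul_div_assoc, ← hq] at hδsucc
  unfold ipahdEnergy
  rw [hδq] at hδsucc ⊢
  linarith

end IPAHD

theorem ipahd_gradient_summability_general
    {H : Type*} [NormedAddCommGroup H] [InnerProductSpace ℝ H] [CompleteSpace H]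
    (f : H → ℝ) (hconv : ConvexOn ℝ Set.univ f) (hdiff : Differentiable ℝ f)
    (xstar : H) (hmin : ∀ y, f xstar ≤ f y)
    (α h : ℝ) (hα : 1 ≤ α) (hh : 0 < h)
    (β b : ℕ → ℝ) (hβnn : ∀ k, 0 ≤ β k)
    (x : ℕ → H)
    (hrec : ∀ k : ℕ, 1 ≤ k →
      (k : ℝ) • (x (k + 1) - (2 : ℝ) • x k + x (k - 1)) + α • (x (k + 1) - x k)
        + (β k * h * k) • (gradient f (x (k + 1)) - gradient f (x k))
        + (b k * h ^ 2 * k) • gradient f (x (k + 1)) = 0)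
    (δ : ℕ → ℝ)
    (hδ : ∀ k : ℕ, δ k = h * (b k * h * k - β (k + 1) - k * (β (k + 1) - β k)) * (k + 1))
    (hG2 : ∀ k : ℕ, 1 ≤ k → 0 < b k * h * k - β (k + 1) - (k : ℝ) * (β (k + 1) - β k))
    (hG3 : ∀ k ≥ 1, δ (k + 1) - δ k ≤ (α - 1) * δ k / (k + 1)) :
    Summable (fun k => δ k * β (k + 1) * ‖gradient f (x (k + 1))‖ ^ 2) := by
  have hδpos : ∀ k, 1 ≤ k → 0 < δ k := fun k hk => by
    have := hG2 k hk
    rw [hδ]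
    positivity
  have hterm_nonneg : ∀ k, 0 ≤ δ (k + 1) * β (k + 2) * ‖gradient f (x (k + 2))‖ ^ 2 :=
    fun k => mul_nonneg (mul_nonneg (hδpos _ (by omega)).le (hβnn _)) (sq_nonneg _)
  have hdescent := summable_of_add_le_of_nonneg
    (E := fun k => ipahdEnergy f xstar α h β x δ (k + 1))
    (fun k => add_nonneg (mul_nonneg (hδpos _ (by omega)).le (sub_nonneg.2 (hmin _)))
      (by positivity))
    (fun k => mul_nonneg hh.le (hterm_nonneg k))
    (fun k => ipahdEnergy_succ_add_le hconv (by omega) (hdiff _) (hmin _) hα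
      (hrec _ (by omega)) (hδ _) (hδpos _ (by omega)).le (hG3 _ (by omega)))
  rw [summable_mul_left_iff hh.ne'] at hdescent
  exact (summable_nat_add_iff 1).mp hdescent

/-- Theorem 3.1 (ii): summability of the gradients for (IPAHD). -/
theorem ipahd_gradient_summability
    {H : Type*} [NormedAddCommGroup H] [InnerProductSpace ℝ H] [CompleteSpace H]
    (f : H → ℝ) (hconv : ConvexOn ℝ Set.univ f) (hdiff : Differentiable ℝ f)
    (xstar : H) (hmin : ∀ y, f xstar ≤ f y)
    (α h : ℝ) (hα : 1 ≤ α) (hh : 0 < h)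
    (β b : ℕ → ℝ) (hβnn : ∀ k, 0 ≤ β k) (hbnn : ∀ k, 0 ≤ b k)
    (x : ℕ → H)
    (hrec : ∀ k : ℕ, 1 ≤ k →
      (k : ℝ) • (x (k + 1) - (2 : ℝ) • x k + x (k - 1)) + α • (x (k + 1) - x k)
        + (β k * h * k) • (gradient f (x (k + 1)) - gradient f (x k))
        + (b k * h ^ 2 * k) • gradient f (x (k + 1)) = 0)
    (δ : ℕ → ℝ)
    (hδ : ∀ k : ℕ, δ k = h * (b k * h * k - β (k + 1) - k * (β (k + 1) - β k)) * (k + 1))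
    (hG2 : ∀ k : ℕ, 1 ≤ k → 0 < b k * h * k - β (k + 1) - (k : ℝ) * (β (k + 1) - β k))
    (hG3 : ∀ k ≥ 1, δ (k + 1) - δ k ≤ (α - 1) * δ k / (k + 1)) :
    Summable (fun k => δ k * β (k + 1) * ‖gradient f (x (k + 1))‖ ^ 2) :=
  ipahd_gradient_summability_general f hconv hdiff xstar hmin α h hα hh β b hβnn x hrec δ hδ hG2 hG3
end

section
/- Let f : H → ℝ be a μ-strongly convex function of class C² with unique minimizer x*, let 0 ≤ β ≤ 1/(2√μ), and let x : [t₀,∞) → H be a twice continuously differentiable solution of ẍ(t) + 2√μ·ẋ(t) + β·∇²f(x(t))ẋ(t) + ∇f(x(t)) = 0. Then for all t ≥ t₀, (μ/2)‖x(t) − x*‖² ≤ f(x(t)) − min_H f ≤ C·e^{−(√μ/2)(t − t₀)}, where C := f(x(t₀)) − min_H f + μ‖x(t₀) − x*‖² + ‖ẋ(t₀) + β∇f(x(t₀))‖². -/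
/-!
Along the trajectory, the energy `E = f x - f x* + ½ ‖ẋ + β ∇f(x) + √μ (x - x*)‖²` satisfies
`E' + (√μ / 2) E ≤ 0`. Strong convexity bounds `⟪∇f(x), x - x*⟫` below by
`f x - f x* + (μ / 2) ‖x - x*‖²` and `f x - f x*` below by `(μ / 2) ‖x - x*‖²`; with these,
`√μ β ≤ 1 / 2` makes what remains of `E' + (√μ / 2) E` a negative semidefinite quadratic form in
`(ẋ, ∇f(x), x - x*)`. Grönwall's inequality then gives `E t ≤ E t₀ e^{-(√μ / 2)(t - t₀)}`, and
`‖a + b‖² ≤ 2 ‖a‖² + 2 ‖b‖²` bounds `E t₀` by the stated constant.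
-/

open Real Set InnerProductSpace
open scoped RealInnerProductSpace

theorem ConvexOn.add_fderiv_sub_le {E : Type*} [NormedAddCommGroup E] [NormedSpace ℝ E]
    {s : Set E} {g : E → ℝ} {g' : E →L[ℝ] ℝ} {a b : E} (hg : ConvexOn ℝ s g)
    (ha : a ∈ s) (hb : b ∈ s) (hg' : HasFDerivAt g g' a) :
    g a + g' (b - a) ≤ g b := by
  let ℓ : ℝ →ᵃ[ℝ] E := AffineMap.lineMap a b
  have hℓ0 : ℓ 0 = a := AffineMap.lineMap_apply_zero a b
  have hℓ1 : ℓ 1 = b := AffineMap.lineMap_apply_one a b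
  have hline : ConvexOn ℝ (ℓ ⁻¹' s) (g ∘ ℓ) := hg.comp_affineMap ℓ
  have hderiv : HasDerivAt (g ∘ ℓ) (g' (b - a)) 0 :=
    hg'.comp_hasDerivAt_of_eq 0 AffineMap.hasDerivAt_lineMap (AffineMap.lineMap_apply_zero a b).symm
  have := hline.le_slope_of_hasDerivAt (x := 0) (y := 1) (by simp [hℓ0, ha])
    (by simp [hℓ1, hb]) one_pos hderiv
  simp only [slope_def_field, Function.comp_apply, hℓ0, hℓ1, sub_zero, div_one] at this
  linarith

section StronglyConvex

variable {H : Type*} [NormedAddCommGroup H] [InnerProductSpace ℝ H] [CompleteSpace H]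
  {s : Set H} {f : H → ℝ} {m : ℝ}

theorem StrongConvexOn.add_inner_sub_add_sq_le {a b G : H} (hf : StrongConvexOn s m f)
    (ha : a ∈ s) (hb : b ∈ s) (hG : HasGradientAt f G a) :
    f a + ⟪G, b - a⟫ + m / 2 * ‖b - a‖ ^ 2 ≤ f b := by
  have hderiv := (hasGradientAt_iff_hasFDerivAt.mp hG).sub
    ((hasStrictFDerivAt_norm_sq a).hasFDerivAt.const_mul (m / 2))
  have := (strongConvexOn_iff_convex.mp hf).add_fderiv_sub_le ha hb hderiv
  simp only [sub_apply, smul_apply, toDual_apply_apply,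
    innerSL_apply_apply, smul_eq_mul, nsmul_eq_mul] at this
  rw [norm_sub_sq_real, inner_sub_right, inner_sub_right, real_inner_self_eq_norm_sq,
    real_inner_comm a b] at *
  linarith

theorem StrongConvexOn.sub_add_sq_le_inner_gradient {a b : H} (hf : StrongConvexOn s m f)
    (ha : a ∈ s) (hb : b ∈ s) (hdf : DifferentiableAt ℝ f a) :
    f a - f b + m / 2 * ‖a - b‖ ^ 2 ≤ ⟪gradient f a, a - b⟫ := by
  have := hf.add_inner_sub_add_sq_le ha hb hdf.hasGradientAt
  rw [← neg_sub a b, inner_neg_right, norm_neg] at this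
  linarith

theorem StrongConvexOn.sq_norm_sub_le_sub_of_forall_le {xstar z : H}
    (hf : StrongConvexOn univ m f) (hdf : DifferentiableAt ℝ f xstar)
    (hmin : ∀ y, f xstar ≤ f y) :
    m / 2 * ‖z - xstar‖ ^ 2 ≤ f z - f xstar := by
  have hgrad : gradient f xstar = 0 := by
    simp [gradient, IsLocalMin.fderiv_eq_zero (Filter.Eventually.of_forall hmin)]
  have := hf.add_inner_sub_add_sq_le (mem_univ xstar) (mem_univ z) hdf.hasGradientAt
  rw [hgrad, inner_zero_left] at this
  linarith

end StronglyConvex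

theorem ContDiff.differentiable_gradient {H : Type*} [NormedAddCommGroup H]
    [InnerProductSpace ℝ H] [CompleteSpace H] {f : H → ℝ} {n : WithTop ℕ∞}
    (hf : ContDiff ℝ n f) (hn : 2 ≤ n) : Differentiable ℝ (gradient f) :=
  ((toDual ℝ H).symm.contDiff.comp (hf.fderiv_right (m := 1) hn)).differentiable one_ne_zero

theorem le_mul_exp_of_hasDerivAt_le_neg_mul {E E' : ℝ → ℝ} {c t₀ t : ℝ}
    (hE : ∀ τ ≥ t₀, HasDerivAt E (E' τ) τ) (hdecay : ∀ τ ≥ t₀, E' τ ≤ -c * E τ) (ht : t₀ ≤ t) :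
    E t ≤ E t₀ * exp (-c * (t - t₀)) := by
  have := le_gronwallBound_of_liminf_deriv_right_le (f := E) (f' := E') (δ := E t₀) (K := -c)
    (ε := 0) (a := t₀) (b := t)
    (fun τ hτ => (hE τ hτ.1).continuousAt.continuousWithinAt)
    (fun τ hτ _ hr => (hE τ hτ.1).hasDerivWithinAt.liminf_right_slope_le hr) le_rfl
    (fun τ hτ => by simpa using hdecay τ hτ.1) t ⟨ht, le_rfl⟩
  rwa [gronwallBound_ε0] at this

theorem dampedLyapunov_dissipation {H : Type*} [NormedAddCommGroup H] [InnerProductSpace ℝ H]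
    {s β F : ℝ} (u g w : H) (hs : 0 ≤ s) (hβ : 0 ≤ β)
    (hsβ : s * β ≤ 1 / 2) (hF : s ^ 2 / 2 * ‖w‖ ^ 2 ≤ F)
    (hgw : F + s ^ 2 / 2 * ‖w‖ ^ 2 ≤ ⟪g, w⟫) :
    ⟪g, u⟫ - ⟪u + β • g + s • w, s • u + g⟫ + s / 2 * (F + 1 / 2 * ‖u + β • g + s • w‖ ^ 2)
      ≤ 0 := by
  have hv : ‖u + β • g + s • w‖ ^ 2 = ‖u‖ ^ 2 + β ^ 2 * ‖g‖ ^ 2 + s ^ 2 * ‖w‖ ^ 2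
      + 2 * β * ⟪u, g⟫ + 2 * s * ⟪u, w⟫ + 2 * s * β * ⟪g, w⟫ := by
    simp only [norm_add_sq_real, inner_add_left, inner_smul_left, inner_smul_right, norm_smul,
      mul_pow, norm_eq_abs, sq_abs, conj_trivial]
    ring
  have hvu : ⟪u + β • g + s • w, s • u + g⟫ = s * ‖u‖ ^ 2 + (1 + s * β) * ⟪u, g⟫
      + β * ‖g‖ ^ 2 + s ^ 2 * ⟪u, w⟫ + s * ⟪g, w⟫ := by
    simp only [inner_add_left, inner_add_right, inner_smul_left, inner_smul_right,
      real_inner_self_eq_norm_sq, real_inner_comm g w, real_inner_comm u g, real_inner_comm u w,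
      conj_trivial]
    ring
  have hug : 0 ≤ ‖u‖ ^ 2 + 2 * β * ⟪u, g⟫ + β ^ 2 * ‖g‖ ^ 2 := by
    simpa [norm_add_sq_real, inner_smul_right, norm_smul, mul_pow, mul_assoc]
      using sq_nonneg ‖u + β • g‖
  have huw : 0 ≤ ‖u‖ ^ 2 + s * ⟪u, w⟫ + s ^ 2 / 4 * ‖w‖ ^ 2 := by
    have := sq_nonneg ‖u + (s / 2) • w‖
    simp only [norm_add_sq_real, inner_smul_right, norm_smul, mul_pow, norm_eq_abs, sq_abs] at this
    linarith
  rw [hv, hvu, real_inner_comm u g]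
  -- minus the left side is `s / 4 ‖u + β g‖² + s / 2 ‖u + (s / 2) w‖² + c₃ ‖g‖² + c₄ ‖w‖²`
  -- plus `hgw` weighted by `c₁` and `hF` weighted by `c₂`
  have c₁ : 0 ≤ s * (1 - s * β / 2) := by nlinarith
  have c₂ : 0 ≤ s / 2 * (1 - s * β) := by nlinarith
  have c₃ : 0 ≤ β * (1 - s * β / 2) := by nlinarith
  have c₄ : 0 ≤ s ^ 3 * (3 / 8 - s * β / 2) := by have := pow_nonneg hs 3; nlinarith
  linarith [mul_le_mul_of_nonneg_left hgw c₁, mul_le_mul_of_nonneg_left hF c₂,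
    mul_nonneg c₃ (sq_nonneg ‖g‖), mul_nonneg c₄ (sq_nonneg ‖w‖),
    mul_nonneg hs hug, mul_nonneg hs huw]

section HessianDamping

variable {H : Type*} [NormedAddCommGroup H] [InnerProductSpace ℝ H] [CompleteSpace H]
  {f : H → ℝ} {s β : ℝ} {xstar : H}

noncomputable def dampedLyapunov (f : H → ℝ) (s β : ℝ) (xstar x v : H) : ℝ :=
  f x - f xstar + 1 / 2 * ‖v + β • gradient f x + s • (x - xstar)‖ ^ 2

theorem sub_le_dampedLyapunov {x v : H} : f x - f xstar ≤ dampedLyapunov f s β xstar x v :=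
  le_add_of_nonneg_right (by positivity)

theorem dampedLyapunov_le_sub_add_sq {x v : H} :
    dampedLyapunov f s β xstar x v
      ≤ f x - f xstar + s ^ 2 * ‖x - xstar‖ ^ 2 + ‖v + β • gradient f x‖ ^ 2 := by
  have hab := (pow_le_pow_left₀ (norm_nonneg _)
    (norm_add_le (v + β • gradient f x) (s • (x - xstar))) 2).trans add_sq_le
  rw [norm_smul, mul_pow, norm_eq_abs, sq_abs] at hab
  unfold dampedLyapunov
  linarith

theorem hasDerivAt_dampedLyapunov {x x' x'' : ℝ → H} {t : ℝ}
    (hf : DifferentiableAt ℝ f (x t)) (hgrad : DifferentiableAt ℝ (gradient f) (x t))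
    (hx' : HasDerivAt x (x' t) t) (hx'' : HasDerivAt x' (x'' t) t)
    (hode : x'' t + (2 * s) • x' t + β • fderiv ℝ (gradient f) (x t) (x' t)
      + gradient f (x t) = 0) :
    HasDerivAt (fun τ => dampedLyapunov f s β xstar (x τ) (x' τ))
      (⟪gradient f (x t), x' t⟫ - ⟪x' t + β • gradient f (x t) + s • (x t - xstar),
        s • x' t + gradient f (x t)⟫) t := by
  have hv : HasDerivAt (fun τ => x' τ + β • gradient f (x τ) + s • (x τ - xstar))
      (-(s • x' t + gradient f (x t))) t := by
    have := (hx''.add ((hgrad.hasFDerivAt.comp_hasDerivAt t hx').const_smul β)).add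
      ((hx'.sub_const xstar).const_smul s)
    refine this.congr_deriv ?_
    linear_combination (norm := module) hode
  have hfx : HasDerivAt (fun τ => f (x τ)) ⟪gradient f (x t), x' t⟫ t := by
    rw [inner_gradient_left]
    exact hf.hasFDerivAt.comp_hasDerivAt t hx'
  refine ((hfx.sub_const (f xstar)).add (hv.norm_sq.const_mul (1 / 2))).congr_deriv ?_
  rw [inner_neg_right]
  ring

theorem dampedLyapunov_le_mul_exp {x x' x'' : ℝ → H} {t₀ t : ℝ}
    (hf : Differentiable ℝ f) (hgrad : Differentiable ℝ (gradient f))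
    (hsc : StrongConvexOn univ (s ^ 2) f) (hmin : ∀ y, f xstar ≤ f y)
    (hs : 0 ≤ s) (hβ : 0 ≤ β) (hsβ : s * β ≤ 1 / 2)
    (hx' : ∀ τ ≥ t₀, HasDerivAt x (x' τ) τ) (hx'' : ∀ τ ≥ t₀, HasDerivAt x' (x'' τ) τ)
    (hode : ∀ τ ≥ t₀, x'' τ + (2 * s) • x' τ + β • fderiv ℝ (gradient f) (x τ) (x' τ)
      + gradient f (x τ) = 0) (ht : t₀ ≤ t) :
    dampedLyapunov f s β xstar (x t) (x' t)
      ≤ dampedLyapunov f s β xstar (x t₀) (x' t₀) * exp (-(s / 2) * (t - t₀)) := by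
  refine le_mul_exp_of_hasDerivAt_le_neg_mul (fun τ hτ => hasDerivAt_dampedLyapunov (hf _)
    (hgrad _) (hx' τ hτ) (hx'' τ hτ) (hode τ hτ)) (fun τ _ => ?_) ht
  have := dampedLyapunov_dissipation (x' τ) (gradient f (x τ)) (x τ - xstar) hs hβ hsβ
    (hsc.sq_norm_sub_le_sub_of_forall_le (hf xstar) hmin)
    (hsc.sub_add_sq_le_inner_gradient (mem_univ _) (mem_univ _) (hf (x τ)))
  unfold dampedLyapunov
  linarith

end HessianDamping

theorem din_strongly_convex_exponential_value_rate_general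
    {H : Type*} [NormedAddCommGroup H] [InnerProductSpace ℝ H] [CompleteSpace H]
    (f : H → ℝ) (hf : ContDiff ℝ 2 f)
    (μ : ℝ) (hμ : 0 < μ)
    (hsc : ConvexOn ℝ Set.univ (fun z => f z - μ / 2 * ‖z‖ ^ 2))
    (xstar : H) (hmin : ∀ y, f xstar ≤ f y)
    (β : ℝ) (hβ0 : 0 ≤ β) (hβ : β ≤ 1 / (2 * Real.sqrt μ))
    (t₀ : ℝ)
    (x x' x'' : ℝ → H)
    (hx' : ∀ t ≥ t₀, HasDerivAt x (x' t) t)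
    (hx'' : ∀ t ≥ t₀, HasDerivAt x' (x'' t) t)
    (hode : ∀ t ≥ t₀,
      x'' t + (2 * Real.sqrt μ) • x' t
        + β • (fderiv ℝ (gradient f) (x t)) (x' t) + gradient f (x t) = 0) :
    ∀ t ≥ t₀,
      μ / 2 * ‖x t - xstar‖ ^ 2 ≤ f (x t) - f xstar ∧
      f (x t) - f xstar ≤
        (f (x t₀) - f xstar + μ * ‖x t₀ - xstar‖ ^ 2
            + ‖x' t₀ + β • gradient f (x t₀)‖ ^ 2) *
          Real.exp (-(Real.sqrt μ / 2) * (t - t₀)) := by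
  intro t ht
  have hsμ : √μ ^ 2 = μ := sq_sqrt hμ.le
  have hsβ : √μ * β ≤ 1 / 2 := by
    rw [le_div_iff₀ (by positivity)] at hβ
    linarith
  have hsc' : StrongConvexOn univ μ f := strongConvexOn_iff_convex.mpr hsc
  have hdf : Differentiable ℝ f := hf.differentiable two_ne_zero
  refine ⟨hsc'.sq_norm_sub_le_sub_of_forall_le (hdf xstar) hmin, ?_⟩
  calc f (x t) - f xstar ≤ dampedLyapunov f √μ β xstar (x t) (x' t) := sub_le_dampedLyapunov
    _ ≤ dampedLyapunov f √μ β xstar (x t₀) (x' t₀) * exp (-(√μ / 2) * (t - t₀)) :=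
        dampedLyapunov_le_mul_exp hdf (hf.differentiable_gradient le_rfl) (by rwa [hsμ]) hmin
          (sqrt_nonneg μ) hβ0 hsβ hx' hx'' hode ht
    _ ≤ _ := by
        gcongr
        have := dampedLyapunov_le_sub_add_sq (f := f) (s := √μ) (β := β) (xstar := xstar)
          (x := x t₀) (v := x' t₀)
        rwa [hsμ] at this

/-- Theorem 4.1 (i): exponential convergence of the values for the strongly
convex inertial dynamic with Hessian driven damping. -/
theorem din_strongly_convex_exponential_value_rate
    {H : Type*} [NormedAddCommGroup H] [InnerProductSpace ℝ H] [CompleteSpace H]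
    (f : H → ℝ) (hf : ContDiff ℝ 2 f)
    (μ : ℝ) (hμ : 0 < μ)
    (hsc : ConvexOn ℝ Set.univ (fun z => f z - μ / 2 * ‖z‖ ^ 2))
    (xstar : H) (hmin : ∀ y, f xstar ≤ f y)
    (β : ℝ) (hβ0 : 0 ≤ β) (hβ : β ≤ 1 / (2 * Real.sqrt μ))
    (t₀ : ℝ) (ht₀ : 0 < t₀)
    (x x' x'' : ℝ → H)
    (hx' : ∀ t ≥ t₀, HasDerivAt x (x' t) t)
    (hx'' : ∀ t ≥ t₀, HasDerivAt x' (x'' t) t)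
    (hx''cont : ContinuousOn x'' (Set.Ici t₀))
    (hode : ∀ t ≥ t₀,
      x'' t + (2 * Real.sqrt μ) • x' t
        + β • (fderiv ℝ (gradient f) (x t)) (x' t) + gradient f (x t) = 0) :
    ∀ t ≥ t₀,
      μ / 2 * ‖x t - xstar‖ ^ 2 ≤ f (x t) - f xstar ∧
      f (x t) - f xstar ≤
        (f (x t₀) - f xstar + μ * ‖x t₀ - xstar‖ ^ 2
            + ‖x' t₀ + β • gradient f (x t₀)‖ ^ 2) *
          Real.exp (-(Real.sqrt μ / 2) * (t - t₀)) :=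
  din_strongly_convex_exponential_value_rate_general f hf μ hμ hsc xstar hmin β hβ0 hβ t₀ x x' x''
    hx' hx'' hode
end
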